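/- arXiv:0709.1738 — 4 statements merged into one kernel-verified Lean document; each statement's English description precedes it below -/
import Mathlib

section
/- Let K be a field of characteristic 0 and F(x) ∈ xK[[x]] with nonzero linear coefficient. Then for every positive integer n, n·[x^n] F^{-1}(x) equals the residue [x^{-1}] F(x)^{-n}, the coefficient of x^{-1} in the formal Laurent series F(x)^{-n}. -/
open PowerSeries Finset

/-- `IsComposition A u B` asserts that `B = A ∘ u` as formal power series, expressed
coefficientwise (valid when `u` has zero constant term). -/
def IsComposition {K : Type*} [Field K] (A u B : PowerSeries K) : Prop :=
  ∀ n : ℕ, PowerSeries.coeff n B =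
    ∑ i ∈ Finset.range (n + 1), PowerSeries.coeff i A * PowerSeries.coeff n (u ^ i)

/-!
Write `F = X u` and let `G` be the compositional inverse. Differentiating `G(F(x)) = x` gives
`G'(F) F' = 1`, i.e. `∑ₖ k gₖ F^{k-1} F' = 1`. Multiply by `F^{-n}` and take residues: for
`k ≠ n` the term `F^{k-n-1} F'` is the derivative of `F^{k-n}/(k-n)` and has residue `0`, while
`F^{-1} F'` has residue `1`. Hence `n gₙ = res F^{-n}`. Everything is computed inside `K⟦X⟧`,
where `res (F^{-n} H) = [x^{n-1}] (u^{-n} H)`.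
-/

namespace PowerSeries

section CommRing

variable {R : Type*} [CommRing R]

theorem coeff_pow_eq_zero_of_lt {G : R⟦X⟧} (hG : constantCoeff G = 0) {i m : ℕ} (h : m < i) :
    coeff m (G ^ i) = 0 :=
  X_pow_dvd_iff.mp (pow_dvd_pow_of_dvd (X_dvd_iff.mpr hG) i) m h

theorem coeff_subst_eq_sum_range {G : R⟦X⟧} (hG : constantCoeff G = 0) (A : R⟦X⟧)
    {m M : ℕ} (hm : m < M) :
    coeff m (A.subst G) = ∑ i ∈ range M, coeff i A * coeff m (G ^ i) := by
  rw [coeff_subst' (HasSubst.of_constantCoeff_zero' hG)]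
  refine finsum_eq_sum_of_support_subset _ fun i hi => ?_
  by_contra hiM
  rw [mem_coe, mem_range, not_lt] at hiM
  exact hi (by simp only [coeff_pow_eq_zero_of_lt hG (hm.trans_le hiM), smul_zero])

theorem coeff_subst_mul {G : R⟦X⟧} (hG : constantCoeff G = 0) (A B : R⟦X⟧) (m : ℕ) :
    coeff m (A.subst G * B) = ∑ i ∈ range (m + 1), coeff i A * coeff m (G ^ i * B) := by
  simp only [coeff_mul, mul_sum]
  rw [sum_comm]
  refine sum_congr rfl fun p hp => ?_
  rw [coeff_subst_eq_sum_range hG A (Finset.Nat.antidiagonal.fst_lt hp), sum_mul]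
  exact sum_congr rfl fun i _ => mul_assoc _ _ _

theorem subst_eq_X_of_subst_eq_X {F G : R⟦X⟧} (hF0 : constantCoeff F = 0)
    (hF1 : IsUnit (coeff 1 F)) (hG0 : constantCoeff G = 0) (h : F.subst G = X) :
    G.subst F = X := by
  have hF := HasSubst.of_constantCoeff_zero' hF0
  have hG := HasSubst.of_constantCoeff_zero' hG0
  set H := F.substInvOfIsUnit hF1
  have hGH : G = H := calc
    G = subst G (subst F H) := by rw [subst_substInvOfIsUnit_left F hF0, subst_X (R := R) hG]
    _ = subst X H := by rw [subst_comp_subst_apply hF hG, h]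
    _ = H := X_subst H
  rw [hGH, subst_substInvOfIsUnit_left F hF0]

end CommRing

theorem isComposition_iff_subst_eq {K : Type*} [Field K] {A G B : K⟦X⟧}
    (hG : constantCoeff G = 0) : IsComposition A G B ↔ A.subst G = B := by
  simp only [IsComposition, PowerSeries.ext_iff,
    coeff_subst_eq_sum_range hG A (Nat.lt_succ_self _), eq_comm]

section Field

variable {K : Type*} [Field K]

/-- For `F = X u` this is `res (F^{-(m+1)} F')`; when `m ≥ 1` that is the residue of the
derivative `-(F^{-m})' / m`, hence `0`. -/
theorem coeff_inv_pow_mul_derivative_X_mul [CharZero K] {u : K⟦X⟧} (hu : constantCoeff u ≠ 0)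
    (m : ℕ) : coeff m (u⁻¹ ^ (m + 1) * d⁄dX K (X * u)) = if m = 0 then 1 else 0 := by
  set v := u⁻¹
  have huv : u * v = 1 := PowerSeries.mul_inv_cancel u hu
  have hdXu : d⁄dX K (X * u) = u + X * d⁄dX K u := by
    rw [Derivation.leibniz, smul_eq_mul, smul_eq_mul, derivative_X, mul_one, add_comm]
  rcases m with _ | k
  · rw [if_pos rfl, zero_add, pow_one, hdXu, mul_add,
      mul_comm v u, huv, map_add, mul_left_comm, coeff_zero_X_mul, coeff_one, if_pos rfl, add_zero]
  · rw [if_neg k.succ_ne_zero]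
    have hsplit :
        v ^ (k + 2) * d⁄dX K (X * u) = v ^ (k + 1) + X * (v ^ (k + 2) * d⁄dX K u) := by
      rw [hdXu, mul_add, pow_succ, mul_assoc, mul_comm v u, huv, mul_one]
      ring
    have hdpow : d⁄dX K (v ^ (k + 1)) = -(C ((k : K) + 1) * (v ^ (k + 2) * d⁄dX K u)) := by
      rw [derivative_pow, derivative_inv', map_add, map_one, map_natCast]
      push_cast
      ring
    have hcoeff := coeff_derivative (v ^ (k + 1)) k
    rw [hdpow, map_neg, coeff_C_mul] at hcoeff
    have : ((k : K) + 1) * coeff (k + 1) (v ^ (k + 2) * d⁄dX K (X * u)) = 0 := by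
      rw [hsplit, map_add, coeff_succ_X_mul]
      linear_combination -hcoeff
    exact (mul_eq_zero.mp this).resolve_left (Nat.cast_add_one_ne_zero k)

theorem coeff_X_mul_pow_mul_inv_pow_mul_derivative [CharZero K] {u : K⟦X⟧}
    (hu : constantCoeff u ≠ 0) {i N : ℕ} (hiN : i ≤ N) :
    coeff N ((X * u) ^ i * (u⁻¹ ^ (N + 1) * d⁄dX K (X * u))) = if i = N then 1 else 0 := by
  obtain ⟨m, rfl⟩ := Nat.exists_eq_add_of_le hiN
  have hu_inv : u ^ i * u⁻¹ ^ (i + m + 1) = u⁻¹ ^ (m + 1) := by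
    rw [add_assoc, pow_add, ← mul_assoc, ← mul_pow, PowerSeries.mul_inv_cancel u hu, one_pow,
      one_mul]
  rw [mul_pow, mul_assoc, ← mul_assoc (u ^ i), hu_inv, coeff_X_pow_mul', if_pos (by omega),
    Nat.add_sub_cancel_left, coeff_inv_pow_mul_derivative_X_mul hu]
  simp

theorem lagrange_inversion [CharZero K] {u G : K⟦X⟧} (hu : constantCoeff u ≠ 0)
    (hG : G.subst (X * u) = X) (N : ℕ) :
    coeff N (u⁻¹ ^ (N + 1)) = (N + 1) * coeff (N + 1) G := by
  have hF0 : constantCoeff (X * u) = 0 := by simp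
  have hchain : (d⁄dX K G).subst (X * u) * d⁄dX K (X * u) = 1 := by
    rw [← derivative_subst (HasSubst.of_constantCoeff_zero' hF0), hG, derivative_X]
  calc coeff N (u⁻¹ ^ (N + 1))
      = coeff N ((d⁄dX K G).subst (X * u) * (u⁻¹ ^ (N + 1) * d⁄dX K (X * u))) := by
        rw [mul_left_comm, hchain, mul_one]
    _ = ∑ i ∈ range (N + 1), coeff i (d⁄dX K G) * if i = N then 1 else 0 := by
        rw [coeff_subst_mul hF0]
        refine sum_congr rfl fun i hi => ?_
        rw [coeff_X_mul_pow_mul_inv_pow_mul_derivative hu (Nat.le_of_lt_succ (mem_range.mp hi))]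
    _ = (N + 1) * coeff (N + 1) G := by
        rw [sum_eq_single_of_mem N (self_mem_range_succ N)
            fun i _ hi => by rw [if_neg hi, mul_zero],
          if_pos rfl, mul_one, coeff_derivative, mul_comm]

theorem coeff_ofPowerSeries_X_mul_zpow_neg {u : K⟦X⟧} (hu : constantCoeff u ≠ 0) (n k : ℕ) :
    ((HahnSeries.ofPowerSeries ℤ K (X * u) : LaurentSeries K) ^ (-(n : ℤ))).coeff (k - n) =
      coeff k (u⁻¹ ^ n) := by
  have hX : (HahnSeries.ofPowerSeries ℤ K X : LaurentSeries K) ^ (-(n : ℤ)) =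
      HahnSeries.single (-(n : ℤ)) 1 := by
    rw [HahnSeries.ofPowerSeries_X, RatFunc.single_zpow (-(n : ℤ))]
  have hu_zpow : (HahnSeries.ofPowerSeries ℤ K u : LaurentSeries K) ^ (-(n : ℤ)) =
      HahnSeries.ofPowerSeries ℤ K (u⁻¹ ^ n) := by
    rw [zpow_neg, zpow_natCast]
    refine inv_eq_of_mul_eq_one_right ?_
    rw [← map_pow, ← map_mul, ← mul_pow, PowerSeries.mul_inv_cancel u hu, one_pow, map_one]
  rw [map_mul, mul_zpow, hX, hu_zpow, sub_eq_add_neg, HahnSeries.coeff_single_mul_add, one_mul,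
    HahnSeries.ofPowerSeries_apply_coeff]

end Field

end PowerSeries

/-- Lagrange inversion, residue form: for `F ∈ xK[[x]]` with nonzero linear coefficient
and compositional inverse `G`, and `n ≥ 1`, one has
`n·[x^n]G = [x^{-1}](F^{-n})` in the field of formal Laurent series. -/
theorem lagrange_inversion_residue {K : Type*} [Field K] [CharZero K]
    (F G : PowerSeries K)
    (hF0 : PowerSeries.constantCoeff F = 0)
    (hF1 : PowerSeries.coeff 1 F ≠ 0)
    (hG0 : PowerSeries.constantCoeff G = 0)
    (hinv : IsComposition F G PowerSeries.X)
    (n : ℕ) (hn : 1 ≤ n) :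
    (n : K) * PowerSeries.coeff n G
      = (((HahnSeries.ofPowerSeries ℤ K F : LaurentSeries K) ^ (-(n : ℤ))).coeff (-1)) := by
  obtain ⟨N, rfl⟩ := Nat.exists_eq_add_of_le' hn
  obtain ⟨u, rfl⟩ := X_dvd_iff.mpr hF0
  have hu : constantCoeff u ≠ 0 := by
    rwa [← coeff_zero_eq_constantCoeff_apply, ← coeff_succ_X_mul]
  have hGF : G.subst (X * u) = X :=
    subst_eq_X_of_subst_eq_X hF0 hF1.isUnit hG0 ((isComposition_iff_subst_eq hG0).mp hinv)
  have hres : (-1 : ℤ) = N - ((N + 1 : ℕ) : ℤ) := by push_cast; ring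
  rw [hres, coeff_ofPowerSeries_X_mul_zpow_neg hu, lagrange_inversion hu hGF]
  push_cast
  rfl
end

section
/- Fix τ ∈ K, char K = 0. The formal power series ω(x) = Σ_{n≥1} (∏_{a=0}^{n-2}(nτ+a)/n!) x^n satisfies ω(x)·(1-ω(x))^τ = x in K[[x]], where (1-ω)^τ is defined by the binomial series Σ_{r≥0} binom(τ,r)(-ω)^r. -/
/-!
Write `φ = X * B` with `B = (1 - X)^τ`, so the claim is `φ(ω) = X`. By Lagrange inversion the
compositional inverse `g` of `φ` satisfies `(n+1) [Xⁿ⁺¹] g = [Xⁿ] B⁻ⁿ⁻¹`, and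
`B⁻ⁿ⁻¹ = (1 - X)^(-(n+1)τ)` has exactly the coefficients that define `ω`; hence `ω = g`.

Lagrange inversion comes from differentiating `g(φ) = X` to `g'(φ) φ' = 1`, multiplying by
`B⁻ᵉ⁻¹` and reading off the coefficient of `Xᵉ`: for `d ≤ e` the term `φᵈ φ' B⁻ᵉ⁻¹` equals
`Xᵈ φ' B⁻ᵐ⁻¹` with `m = e - d`, and `m φ' B⁻ᵐ⁻¹ = m B⁻ᵐ - X (B⁻ᵐ)'`, whose `Xᵐ`-coefficient
vanishes because `[Xᵐ] (X F') = m [Xᵐ] F`.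
-/

open PowerSeries Finset

variable {K : Type*} [Field K]

/-- The binomial series `(1-x)^τ = ∑_{r≥0} binom(τ,r)(-x)^r`. -/
noncomputable def oneSubPow [CharZero K] (τ : K) : PowerSeries K :=
  PowerSeries.mk fun r => ((-1 : K) ^ r * ∏ a ∈ Finset.range r, (τ - a)) / (r.factorial : K)

/-- The series `ω(x) = ∑_{n≥1} (∏_{a=0}^{n-2}(nτ+a)/n!) x^n`. -/
noncomputable def omegaSeries [CharZero K] (τ : K) : PowerSeries K :=
  PowerSeries.mk fun n =>
    if n = 0 then 0 else (∏ a ∈ Finset.range (n - 1), ((n : K) * τ + a)) / (n.factorial : K)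

/-- The composition `A ∘ u` of formal power series, expressed coefficientwise
(this is the usual composition when `u` has zero constant term, since then
`[x^n](u^i) = 0` for `i > n`). -/
noncomputable def seriesComp (A u : PowerSeries K) : PowerSeries K :=
  PowerSeries.mk fun n =>
    ∑ i ∈ Finset.range (n + 1), PowerSeries.coeff i A * PowerSeries.coeff n (u ^ i)

namespace PowerSeries

theorem coeff_subst_mul_s4 {R : Type*} [CommRing R] {φ : R⟦X⟧} (hφ : constantCoeff φ = 0)
    (f H : R⟦X⟧) (n : ℕ) :
    coeff n (f.subst φ * H) = ∑ d ∈ range (n + 1), coeff d f * coeff n (φ ^ d * H) := by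
  have hs : HasSubst φ := HasSubst.of_constantCoeff_zero' hφ
  have htail : coeff n (φ ^ (n + 1) * ((mk fun i ↦ coeff (i + (n + 1)) f).subst φ * H)) = 0 := by
    obtain ⟨ψ, rfl⟩ := X_dvd_iff.mpr hφ
    rw [mul_pow, mul_assoc, coeff_X_pow_mul', if_neg (by omega)]
  conv_lhs => rw [eq_X_pow_mul_shift_add_trunc (n + 1) f]
  rw [subst_add hs, subst_mul hs, subst_pow hs, subst_X hs, subst_coe hs,
    Polynomial.aeval_eq_sum_range' (natDegree_trunc_lt f n), add_mul, mul_assoc, map_add, htail,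
    zero_add, Finset.sum_mul, map_sum]
  refine Finset.sum_congr rfl fun d hd ↦ ?_
  rw [coeff_trunc, if_pos (Finset.mem_range.mp hd), smul_mul_assoc, coeff_smul, smul_eq_mul]

theorem coeff_X_mul_derivative {R : Type*} [CommSemiring R] (f : R⟦X⟧) (n : ℕ) :
    coeff n (X * d⁄dX R f) = n * coeff n f := by
  cases n with
  | zero => simp
  | succ n => rw [coeff_succ_X_mul, coeff_derivative, mul_comm, Nat.cast_succ]

variable [CharZero K]

theorem coeff_derivative_X_mul_mul_inv_pow {B : K⟦X⟧} (hB : constantCoeff B ≠ 0) (m : ℕ) :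
    coeff m (d⁄dX K (X * B) * B⁻¹ ^ (m + 1)) = if m = 0 then 1 else 0 := by
  have hBB : B * B⁻¹ = 1 := PowerSeries.mul_inv_cancel B hB
  have hexpand : d⁄dX K (X * B) * B⁻¹ ^ (m + 1) = B⁻¹ ^ m + X * (d⁄dX K B * B⁻¹ ^ (m + 1)) := by
    rw [Derivation.leibniz, derivative_X, smul_eq_mul, smul_eq_mul]
    linear_combination B⁻¹ ^ m * hBB
  rw [hexpand]
  rcases m with _ | m
  · simp
  · have hderiv : X * d⁄dX K (B⁻¹ ^ (m + 1))
        = C (-((m : K) + 1)) * (X * (d⁄dX K B * B⁻¹ ^ (m + 2))) := by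
      rw [derivative_pow, derivative_inv', map_neg, map_add, map_natCast, map_one]
      push_cast
      ring
    have key := coeff_X_mul_derivative (B⁻¹ ^ (m + 1)) (m + 1)
    rw [hderiv, coeff_C_mul] at key
    rw [map_add, if_neg m.succ_ne_zero]
    refine (mul_eq_zero.mp ?_).resolve_left (Nat.cast_add_one_ne_zero (R := K) m)
    push_cast at key
    linear_combination -key

theorem coeff_pow_mul_derivative_mul_inv_pow {B : K⟦X⟧} (hB : constantCoeff B ≠ 0) {d e : ℕ}
    (hde : d ≤ e) :
    coeff e ((X * B) ^ d * (d⁄dX K (X * B) * B⁻¹ ^ (e + 1))) = if d = e then 1 else 0 := by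
  obtain ⟨m, rfl⟩ := Nat.exists_eq_add_of_le hde
  have hcancel : (X * B) ^ d * (d⁄dX K (X * B) * B⁻¹ ^ (d + m + 1))
      = X ^ d * (d⁄dX K (X * B) * B⁻¹ ^ (m + 1)) := by
    rw [show (X * B) ^ d * (d⁄dX K (X * B) * B⁻¹ ^ (d + m + 1))
        = X ^ d * (B * B⁻¹) ^ d * (d⁄dX K (X * B) * B⁻¹ ^ (m + 1)) by ring,
      PowerSeries.mul_inv_cancel B hB, one_pow, mul_one]
  rw [hcancel, coeff_X_pow_mul', if_pos (Nat.le_add_right d m), Nat.add_sub_cancel_left,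
    coeff_derivative_X_mul_mul_inv_pow hB]
  simp

theorem succ_mul_coeff_succ_of_subst_X_mul_eq_X {B g : K⟦X⟧} (hB : constantCoeff B ≠ 0)
    (hg : g.subst (X * B) = X) (n : ℕ) :
    (n + 1) * coeff (n + 1) g = coeff n (B⁻¹ ^ (n + 1)) := by
  have hφ : constantCoeff (X * B) = 0 := by simp
  have hchain : (d⁄dX K g).subst (X * B) * d⁄dX K (X * B) = 1 := by
    rw [← derivative_subst (HasSubst.of_constantCoeff_zero' hφ), hg, derivative_X]
  calc (n + 1) * coeff (n + 1) g = coeff n (d⁄dX K g) := by rw [coeff_derivative, mul_comm]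
    _ = ∑ d ∈ range (n + 1),
          coeff d (d⁄dX K g) * coeff n ((X * B) ^ d * (d⁄dX K (X * B) * B⁻¹ ^ (n + 1))) := by
      rw [Finset.sum_eq_single_of_mem n (Finset.self_mem_range_succ n) fun d hd hdn ↦ by
        rw [coeff_pow_mul_derivative_mul_inv_pow hB (Finset.mem_range_succ_iff.mp hd),
          if_neg hdn, mul_zero]]
      rw [coeff_pow_mul_derivative_mul_inv_pow hB le_rfl, if_pos rfl, mul_one]
    _ = coeff n (B⁻¹ ^ (n + 1)) := by
      rw [← coeff_subst_mul_s4 hφ, ← mul_assoc, hchain, one_mul]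

theorem subst_X_mul_eq_X_of_coeff {B ω : K⟦X⟧} (hB : constantCoeff B ≠ 0)
    (hω₀ : constantCoeff ω = 0)
    (hω : ∀ n : ℕ, (n + 1) * coeff (n + 1) ω = coeff n (B⁻¹ ^ (n + 1))) :
    (X * B).subst ω = X := by
  have hφ : constantCoeff (X * B) = 0 := by simp
  have hunit : IsUnit (coeff 1 (X * B)) := by simpa [coeff_succ_X_mul] using hB
  suffices ω = substInvOfIsUnit (X * B) hunit by
    rw [this, subst_substInvOfIsUnit_right _ hφ]
  have hg := succ_mul_coeff_succ_of_subst_X_mul_eq_X hB (subst_substInvOfIsUnit_left _ hφ hunit)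
  ext (_ | n)
  · simp [hω₀]
  · exact mul_left_cancel₀ (Nat.cast_add_one_ne_zero n) ((hω n).trans (hg n).symm)

end PowerSeries

section

variable [CharZero K]

theorem Ring.choose_eq_prod_range_div (a : K) (r : ℕ) :
    Ring.choose a r = (∏ j ∈ range r, (a - j)) / r.factorial := by
  rw [Ring.choose_eq_smul, ← Polynomial.eval₂_smulOneHom_eq_smeval ℤ,
    Subsingleton.elim RingHom.smulOneHom (Int.castRingHom K), ← Polynomial.eval_map,
    descPochhammer_map, descPochhammer_eval_eq_prod_range, smul_eq_mul, inv_mul_eq_div]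

theorem oneSubPow_eq_rescale_binomialSeries (a : K) :
    oneSubPow a = rescale (-1) (binomialSeries K a) := by
  ext r
  rw [oneSubPow, coeff_mk, coeff_rescale, binomialSeries_coeff, Ring.choose_eq_prod_range_div]
  simp [mul_div_assoc]

theorem oneSubPow_add (a b : K) : oneSubPow (a + b) = oneSubPow a * oneSubPow b := by
  simp only [oneSubPow_eq_rescale_binomialSeries, binomialSeries_add, map_mul]

theorem constantCoeff_oneSubPow (a : K) : constantCoeff (oneSubPow a) = 1 := by
  simp [← coeff_zero_eq_constantCoeff_apply, oneSubPow]

theorem inv_oneSubPow (a : K) : (oneSubPow a)⁻¹ = oneSubPow (-a) := by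
  rw [PowerSeries.inv_eq_iff_mul_eq_one (by simp [constantCoeff_oneSubPow]), ← oneSubPow_add,
    neg_add_cancel, oneSubPow_eq_rescale_binomialSeries, binomialSeries_zero, map_one]

theorem oneSubPow_pow (a : K) (n : ℕ) : oneSubPow a ^ n = oneSubPow (n * a) := by
  induction n with
  | zero => simp [oneSubPow_eq_rescale_binomialSeries]
  | succ n ih =>
    rw [pow_succ, ih, ← oneSubPow_add]
    congr 1
    push_cast
    ring

theorem succ_mul_coeff_succ_omegaSeries (τ : K) (n : ℕ) :
    (n + 1) * coeff (n + 1) (omegaSeries τ) = coeff n (oneSubPow (-((n + 1) * τ))) := by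
  have hsign : (-1 : K) ^ n * ∏ j ∈ range n, (-((n + 1) * τ) - j)
      = ∏ j ∈ range n, ((n + 1 : ℕ) * τ + j) := by
    rw [show (-1 : K) ^ n = (-1) ^ #(range n) by rw [Finset.card_range], ← Finset.prod_neg]
    refine Finset.prod_congr rfl fun j _ ↦ ?_
    push_cast
    ring
  rw [omegaSeries, oneSubPow, coeff_mk, coeff_mk, if_neg n.succ_ne_zero, Nat.add_sub_cancel,
    hsign, Nat.factorial_succ, Nat.cast_mul]
  field_simp
  push_cast
  ring

theorem constantCoeff_omegaSeries (τ : K) : constantCoeff (omegaSeries τ) = 0 := by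
  simp [← coeff_zero_eq_constantCoeff_apply, omegaSeries]

end

theorem seriesComp_eq_subst {u : K⟦X⟧} (hu : constantCoeff u = 0) (A : K⟦X⟧) :
    seriesComp A u = A.subst u := by
  ext n
  simpa [seriesComp] using (coeff_subst_mul_s4 hu A 1 n).symm

/-- `ω(x)·(1-ω(x))^τ = x`: the explicit series `ω` is the compositional inverse of
`x(1-x)^τ`, where `(1-ω)^τ` is the binomial series evaluated at `ω`. -/
theorem omega_mul_oneSubPow_comp_eq_X [CharZero K] (τ : K) :
    omegaSeries τ * seriesComp (oneSubPow τ) (omegaSeries τ) = PowerSeries.X := by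
  have hω₀ := constantCoeff_omegaSeries τ
  have hω := HasSubst.of_constantCoeff_zero' hω₀
  calc omegaSeries τ * seriesComp (oneSubPow τ) (omegaSeries τ)
      = (X * oneSubPow τ).subst (omegaSeries τ) := by
        rw [subst_mul hω, subst_X hω, seriesComp_eq_subst hω₀]
    _ = X := subst_X_mul_eq_X_of_coeff (by simp [constantCoeff_oneSubPow]) hω₀ fun n ↦ by
        rw [succ_mul_coeff_succ_omegaSeries, inv_oneSubPow, oneSubPow_pow]
        congr 2
        push_cast
        ring
end

section
/- Fix τ ∈ K with τ ≠ 0, char K = 0, and let ω(x) be the compositional inverse of x(1-x)^τ. Define y = 1/(1-(1+τ)ω) ∈ K[[x]]. Then y = 1 + ((1+τ)/τ)·Σ_{n≥1} (∏_{a=0}^{n-1}(nτ+a)/n!) x^n. -/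
/-!
Write `σ` for the series `∑_{n≥1} (∏_{a<n}(nτ+a)/n!) xⁿ`. Multiplying out, the theorem is
equivalent to `σ · (1 - (1+τ)ω) = τω`. This is read off the Hagen–Rothe convolution
`∑_{k+m=n} x/(x+kz) · C(x+kz, k) · C(y+mz, m) = C(x+y+nz, n)` at `z = τ+1`, `x = y = -1`:
there the `k`-th factor is `-ωₖ`, the `m`-th factor is `σₘ`, and `1+τ` times the right-hand
side is `τσₙ - ωₙ`, since all of these are rising factorials of `nτ` or `nτ-1` divided by `n!`.
The convolution is proved by induction on `n`: as polynomials in `x`, both sides obey the same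
Pascal-type recurrence under `x ↦ x+1` and agree at `x = 0`, and in characteristic zero a
polynomial invariant under `x ↦ x+1` is constant.
-/

open PowerSeries Finset

variable {K : Type*} [Field K]

open scoped Polynomial Nat

theorem Polynomial.eq_C_eval_zero_of_eval_add_one {R : Type*} [CommRing R] [IsDomain R]
    [CharZero R] {P : R[X]} (h : ∀ n : ℕ, P.eval ((n : R) + 1) = P.eval (n : R)) :
    P = Polynomial.C (P.eval 0) := by
  have eval_natCast (n : ℕ) : P.eval (n : R) = P.eval 0 := by
    induction n with
    | zero => simp
    | succ n ih => rw [Nat.cast_succ, h, ih]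
  refine Polynomial.eq_of_infinite_eval_eq _ _ <|
    (Set.infinite_range_of_injective (Nat.cast_injective (R := R))).mono ?_
  rintro _ ⟨n, rfl⟩
  simp [eval_natCast]

theorem descPochhammer_succ_eval_add_one {R : Type*} [CommRing R] (n : ℕ) (r : R) :
    (descPochhammer R (n + 1)).eval (r + 1) = (r + 1) * (descPochhammer R n).eval r := by
  simp [descPochhammer_succ_left]

theorem ascPochhammer_eval_eq_prod_range {R : Type*} [CommSemiring R] (n : ℕ) (r : R) :
    (ascPochhammer R n).eval r = ∏ j ∈ range n, (r + j) := by
  induction n with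
  | zero => simp
  | succ n ih => rw [ascPochhammer_succ_eval, ih, prod_range_succ]

section Rothe

noncomputable def rotheChoose (z : K) (m : ℕ) : K[X] :=
  Polynomial.C (m ! : K)⁻¹ * (descPochhammer K m).comp (Polynomial.X + Polynomial.C (m * z))

/-- `x ↦ x/(x+kz) · C(x+kz, k)`, with the division carried out. -/
noncomputable def rotheCoeff (z : K) : ℕ → K[X]
  | 0 => 1
  | k + 1 => Polynomial.C ((k + 1)! : K)⁻¹ * Polynomial.X *
      (descPochhammer K k).comp (Polynomial.X + Polynomial.C ((k + 1 : ℕ) * z - 1))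

@[simp]
theorem rotheCoeff_zero (z : K) : rotheCoeff z 0 = 1 := rfl

theorem eval_rotheChoose (z y : K) (m : ℕ) :
    (rotheChoose z m).eval y = (descPochhammer K m).eval (y + m * z) / m ! := by
  simp [rotheChoose, div_eq_inv_mul]

theorem eval_rotheCoeff_succ (z x : K) (k : ℕ) :
    (rotheCoeff z (k + 1)).eval x =
      x * (descPochhammer K k).eval (x + (k + 1) * z - 1) / (k + 1)! := by
  simp [rotheCoeff, div_eq_inv_mul, add_sub_assoc]
  ring

theorem eval_rotheChoose_eq_ascPochhammer (z y : K) (m : ℕ) :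
    (rotheChoose z m).eval y = (ascPochhammer K m).eval (y + m * z - m + 1) / m ! := by
  rw [eval_rotheChoose, descPochhammer_eval_eq_ascPochhammer]

theorem eval_rotheCoeff_succ_eq_ascPochhammer (z x : K) (k : ℕ) :
    (rotheCoeff z (k + 1)).eval x =
      x * (ascPochhammer K k).eval (x + (k + 1) * z - k) / (k + 1)! := by
  rw [eval_rotheCoeff_succ, descPochhammer_eval_eq_ascPochhammer]
  congr 3
  ring

variable [CharZero K]

theorem eval_rotheChoose_succ_add_one (z y : K) (m : ℕ) :
    (rotheChoose z (m + 1)).eval (y + 1) =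
      (rotheChoose z (m + 1)).eval y + (rotheChoose z m).eval (y + z) := by
  obtain ⟨u, hu⟩ : ∃ u, y + z + m * z = u := ⟨_, rfl⟩
  have h1 : y + 1 + (m + 1 : ℕ) * z = u + 1 := by push_cast; linear_combination hu
  have h2 : y + (m + 1 : ℕ) * z = u := by push_cast; linear_combination hu
  rw [eval_rotheChoose, eval_rotheChoose, eval_rotheChoose, h1, h2, hu,
    descPochhammer_succ_eval_add_one, descPochhammer_succ_eval, Nat.factorial_succ, Nat.cast_mul]
  have := Nat.cast_add_one_ne_zero (R := K) m
  field_simp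
  push_cast
  ring

theorem eval_rotheCoeff_succ_add_one (z x : K) (k : ℕ) :
    (rotheCoeff z (k + 1)).eval (x + 1) =
      (rotheCoeff z (k + 1)).eval x + (rotheCoeff z k).eval (x + z) := by
  cases k with
  | zero => simp [eval_rotheCoeff_succ]
  | succ k =>
    obtain ⟨u, hu⟩ : ∃ u, x + z + (k + 1) * z - 1 = u := ⟨_, rfl⟩
    have h1 : x + 1 + ((k + 1 : ℕ) + 1) * z - 1 = u + 1 := by push_cast; linear_combination hu
    have h2 : x + ((k + 1 : ℕ) + 1) * z - 1 = u := by push_cast; linear_combination hu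
    rw [eval_rotheCoeff_succ, eval_rotheCoeff_succ, eval_rotheCoeff_succ, h1, h2, hu,
      descPochhammer_succ_eval_add_one, descPochhammer_succ_eval, Nat.factorial_succ (k + 1),
      Nat.cast_mul]
    have := Nat.cast_add_one_ne_zero (R := K) (k + 1)
    subst hu
    push_cast at this ⊢
    field_simp
    ring

theorem sum_antidiagonal_eval_rotheCoeff_mul_eval_rotheChoose (z y : K) (n : ℕ) (x : K) :
    ∑ p ∈ antidiagonal n, (rotheCoeff z p.1).eval x * (rotheChoose z p.2).eval y =
      (rotheChoose z n).eval (x + y) := by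
  induction n generalizing x with
  | zero => simp [eval_rotheChoose]
  | succ n ih =>
    let P : K[X] := ∑ p ∈ antidiagonal (n + 1),
        rotheCoeff z p.1 * Polynomial.C ((rotheChoose z p.2).eval y) -
      (rotheChoose z (n + 1)).comp (Polynomial.X + Polynomial.C y)
    have eval_P (t : K) : P.eval t = ∑ p ∈ antidiagonal (n + 1),
        (rotheCoeff z p.1).eval t * (rotheChoose z p.2).eval y -
          (rotheChoose z (n + 1)).eval (t + y) := by
      simp [P, Polynomial.eval_finsetSum]
    have eval_P_add_one (t : K) : P.eval (t + 1) = P.eval t := by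
      simp only [eval_P, Nat.sum_antidiagonal_succ, eval_rotheCoeff_succ_add_one, add_mul,
        sum_add_distrib, ih, rotheCoeff_zero, Polynomial.eval_one]
      rw [add_right_comm t 1 y, eval_rotheChoose_succ_add_one, add_right_comm t y z]
      ring
    have eval_P_zero : P.eval 0 = 0 := by
      simp [eval_P, Nat.sum_antidiagonal_succ, eval_rotheCoeff_succ]
    have := congrArg (Polynomial.eval x)
      (Polynomial.eq_C_eval_zero_of_eval_add_one fun m => eval_P_add_one m)
    rwa [Polynomial.eval_C, eval_P_zero, eval_P, sub_eq_zero] at this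

theorem mk_eval_rotheCoeff_mul_mk_eval_rotheChoose (z x y : K) :
    (mk fun k => (rotheCoeff z k).eval x) * (mk fun m => (rotheChoose z m).eval y) =
      mk fun n => (rotheChoose z n).eval (x + y) := by
  ext n
  simp only [coeff_mul, coeff_mk, sum_antidiagonal_eval_rotheCoeff_mul_eval_rotheChoose]

end Rothe

noncomputable def sigmaSeries (τ : K) : K⟦X⟧ :=
  mk fun n => if n = 0 then 0 else (∏ a ∈ range n, ((n : K) * τ + a)) / n !

theorem coeff_sigmaSeries_succ (τ : K) (n : ℕ) :
    coeff (n + 1) (sigmaSeries τ) =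
      (ascPochhammer K (n + 1)).eval ((n + 1 : ℕ) * τ) / (n + 1)! := by
  simp [sigmaSeries, ascPochhammer_eval_eq_prod_range, -Nat.cast_add]

section CharZero

variable [CharZero K]

theorem coeff_omegaSeries_succ (τ : K) (n : ℕ) :
    coeff (n + 1) (omegaSeries τ) = (ascPochhammer K n).eval ((n + 1 : ℕ) * τ) / (n + 1)! := by
  simp [omegaSeries, ascPochhammer_eval_eq_prod_range]

theorem mk_eval_rotheChoose_neg_one (τ : K) :
    (mk fun m => (rotheChoose (τ + 1) m).eval (-1)) = 1 + sigmaSeries τ := by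
  ext (_ | m)
  · simp [eval_rotheChoose, sigmaSeries]
  · rw [coeff_mk, map_add, coeff_one, if_neg m.succ_ne_zero, zero_add, coeff_sigmaSeries_succ,
      eval_rotheChoose_eq_ascPochhammer]
    congr 3
    ring

theorem mk_eval_rotheCoeff_neg_one (τ : K) :
    (mk fun k => (rotheCoeff (τ + 1) k).eval (-1)) = 1 - omegaSeries τ := by
  ext (_ | k)
  · simp [omegaSeries]
  · rw [coeff_mk, map_sub, coeff_one, if_neg k.succ_ne_zero, zero_sub, coeff_omegaSeries_succ,
      eval_rotheCoeff_succ_eq_ascPochhammer, neg_one_mul, neg_div]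
    congr 4
    push_cast
    ring

theorem C_mul_mk_eval_rotheChoose_neg_two (τ : K) :
    C (1 + τ) * (mk fun m => (rotheChoose (τ + 1) m).eval (-2)) =
      C (1 + τ) + C τ * sigmaSeries τ - omegaSeries τ := by
  ext (_ | n)
  · simp [eval_rotheChoose, sigmaSeries, omegaSeries]
  · have harg : -2 + ((n + 1 : ℕ) : K) * (τ + 1) - (n + 1 : ℕ) + 1 = (n + 1 : ℕ) * τ - 1 := by
      push_cast; ring
    rw [coeff_C_mul, coeff_mk, map_sub, map_add, coeff_C_mul, coeff_C, if_neg n.succ_ne_zero,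
      zero_add, coeff_omegaSeries_succ, coeff_sigmaSeries_succ, eval_rotheChoose_eq_ascPochhammer,
      harg, ascPochhammer_succ_eval n (_ * τ), ascPochhammer_succ_left]
    simp only [Polynomial.eval_mul, Polynomial.eval_X, Polynomial.eval_comp, Polynomial.eval_add,
      Polynomial.eval_one, sub_add_cancel]
    push_cast
    ring

theorem sigmaSeries_mul_one_sub_omegaSeries (τ : K) :
    sigmaSeries τ * (1 - C (1 + τ) * omegaSeries τ) = C τ * omegaSeries τ := by
  have rothe := mk_eval_rotheCoeff_mul_mk_eval_rotheChoose (τ + 1) (-1) (-1)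
  rw [mk_eval_rotheCoeff_neg_one, mk_eval_rotheChoose_neg_one,
    show (-1 + -1 : K) = -2 by norm_num] at rothe
  have neg_two := C_mul_mk_eval_rotheChoose_neg_two τ
  rw [map_add, map_one] at neg_two ⊢
  linear_combination (1 + C τ) * rothe + neg_two

end CharZero

/-- With `y = 1/(1-(1+τ)ω)`, one has
`y = 1 + ((1+τ)/τ) ∑_{n≥1} (∏_{a=0}^{n-1}(nτ+a)/n!) x^n`. -/
theorem y_series_expansion [CharZero K] (τ : K) (hτ : τ ≠ 0) :
    (1 - PowerSeries.C (1 + τ) * omegaSeries τ)⁻¹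
      = 1 + PowerSeries.C ((1 + τ) / τ) *
          PowerSeries.mk (fun n =>
            if n = 0 then 0
            else (∏ a ∈ Finset.range n, ((n : K) * τ + a)) / (n.factorial : K)) := by
  change _ = 1 + C ((1 + τ) / τ) * sigmaSeries τ
  have hunit : constantCoeff (1 - C (1 + τ) * omegaSeries τ) ≠ 0 := by simp [omegaSeries]
  have hc : C ((1 + τ) / τ) * C τ = C (1 + τ) := by rw [← map_mul, div_mul_cancel₀ _ hτ]
  rw [inv_eq_iff_mul_eq_one hunit]
  linear_combination C ((1 + τ) / τ) * sigmaSeries_mul_one_sub_omegaSeries τ + omegaSeries τ * hc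
end

section
/- Fix τ ∈ K, char K = 0, τ+1 ≠ 0, and let D = y(y-1)((yτ+1)/(τ+1))·d/dy on K[y]. Then the leading coefficient of the degree-(2i+1) polynomial D^i((y-1)/(τ+1)) equals (2i-1)!!·τ^i/(τ+1)^{i+1} for all i ≥ 0. -/
open Polynomial

variable {K : Type*} [Field K]

/-- The differential operator `D = y(y-1)((yτ+1)/(τ+1))·d/dy` on `K[y]`. -/
noncomputable def opD (τ : K) (p : Polynomial K) : Polynomial K :=
  Polynomial.C ((τ + 1)⁻¹) *
    (Polynomial.X * (Polynomial.X - 1) * (Polynomial.C τ * Polynomial.X + 1)) *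
    Polynomial.derivative p

/-!
`D` multiplies by a cubic with top coefficient `τ/(τ+1)` and differentiates, so it raises the
degree by at most two and sends the coefficient of `y^(n+1)` to the coefficient of `y^(n+3)`,
scaled by `(n+1)·τ/(τ+1)`. Starting from degree one, the factors `1, 3, 5, …` accumulate to
the double factorial.
-/

section

variable (τ : K)

lemma natDegree_opD_multiplier_le :
    (C (τ + 1)⁻¹ * (X * (X - 1) * (C τ * X + 1))).natDegree ≤ 3 := by
  compute_degree

lemma coeff_opD_multiplier_three :
    (C (τ + 1)⁻¹ * (X * (X - 1) * (C τ * X + 1))).coeff 3 = (τ + 1)⁻¹ * τ := by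
  have hcubic : (X * (X - 1) * (C τ * X + 1) : K[X]) = C τ * X ^ 3 + C (1 - τ) * X ^ 2 - X := by
    rw [map_sub, map_one]
    ring
  rw [coeff_C_mul, hcubic, coeff_sub, coeff_add, coeff_C_mul_X_pow, coeff_C_mul_X_pow, coeff_X]
  norm_num

lemma natDegree_opD_le {p : K[X]} {n : ℕ} (hp : p.natDegree ≤ n + 1) :
    (opD τ p).natDegree ≤ n + 3 := by
  have hder : (derivative p).natDegree ≤ n := (natDegree_derivative_le p).trans (by omega)
  rw [add_comm n]
  exact natDegree_mul_le_of_le (natDegree_opD_multiplier_le τ) hder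

lemma natDegree_opD_iterate_le {p : K[X]} (hp : p.natDegree ≤ 1) (i : ℕ) :
    ((opD τ)^[i] p).natDegree ≤ 2 * i + 1 := by
  induction i with
  | zero => simpa using hp
  | succ i ih =>
    rw [Function.iterate_succ_apply']
    exact natDegree_opD_le τ ih

lemma coeff_opD_of_natDegree_le {p : K[X]} {n : ℕ} (hp : p.natDegree ≤ n + 1) :
    (opD τ p).coeff (n + 3) = (τ + 1)⁻¹ * τ * (n + 1) * p.coeff (n + 1) := by
  have hder : (derivative p).natDegree ≤ n := (natDegree_derivative_le p).trans (by omega)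
  rw [opD, add_comm n, coeff_mul_add_eq_of_natDegree_le (natDegree_opD_multiplier_le τ) hder,
    coeff_opD_multiplier_three, coeff_derivative]
  ring

lemma coeff_opD_iterate_of_natDegree_le_one {p : K[X]} (hp : p.natDegree ≤ 1) (i : ℕ) :
    ((opD τ)^[i] p).coeff (2 * i + 1) =
      ((2 * i - 1).doubleFactorial : K) * ((τ + 1)⁻¹ * τ) ^ i * p.coeff 1 := by
  induction i with
  | zero => simp
  | succ i ih =>
    rw [Function.iterate_succ_apply', show 2 * (i + 1) + 1 = 2 * i + 3 by ring,
      coeff_opD_of_natDegree_le τ (natDegree_opD_iterate_le τ hp i), ih,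
      show 2 * (i + 1) - 1 = 2 * i + 1 by omega, Nat.doubleFactorial_add_one]
    push_cast
    ring

end

theorem opD_iterate_leadingCoeff_general (τ : K) (i : ℕ) :
    ((opD τ)^[i] (Polynomial.C ((τ + 1)⁻¹) * (Polynomial.X - 1))).coeff (2 * i + 1)
      = (Nat.doubleFactorial (2 * i - 1) : K) * τ ^ i / (τ + 1) ^ (i + 1) := by
  have hdeg : (C (τ + 1)⁻¹ * (X - 1) : K[X]).natDegree ≤ 1 := by compute_degree
  rw [coeff_opD_iterate_of_natDegree_le_one τ hdeg, coeff_C_mul, coeff_sub, coeff_X_one,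
    coeff_one, if_neg one_ne_zero, div_eq_mul_inv, ← inv_pow]
  ring

/-- The coefficient of `y^{2i+1}` (the leading coefficient) of `D^i((y-1)/(τ+1))`
equals `(2i-1)!!·τ^i/(τ+1)^{i+1}`. -/
theorem opD_iterate_leadingCoeff [CharZero K] (τ : K) (hτ1 : τ + 1 ≠ 0) (i : ℕ) :
    ((opD τ)^[i] (Polynomial.C ((τ + 1)⁻¹) * (Polynomial.X - 1))).coeff (2 * i + 1)
      = (Nat.doubleFactorial (2 * i - 1) : K) * τ ^ i / (τ + 1) ^ (i + 1) :=
  opD_iterate_leadingCoeff_general τ i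
end
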